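/- Lower bound on the convex-roof I-concurrence: for any bipartite density matrix ρ on C^N ⊗ C^N, the I-concurrence C[ρ] = min over pure decompositions Σₖ pₖ √(2(1 − tr((tr₂|ψₖ⟩⟨ψₖ|)²))) satisfies C[ρ] ≥ √(2/(N(N−1))) · max{‖ρ^{T₁}‖₁ − 1, ‖ρ^{T₂}‖₁ − 1}. -/

import Mathlib

open Matrix
open scoped Kronecker Classical ComplexOrder

noncomputable section

/-- A density matrix: positive semidefinite with unit trace. -/
def IsDensity {N : Type*} [Fintype N] (ρ : Matrix N N ℂ) : Prop :=
  ρ.PosSemidef ∧ ρ.trace = 1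

/-- Outer product `|ψ⟩⟨ψ|`. -/
def outer {N : Type*} (ψ : N → ℂ) : Matrix N N ℂ :=
  Matrix.of fun i j => ψ i * star (ψ j)

/-- Squared norm of a vector. -/
def vnormSq {N : Type*} [Fintype N] (ψ : N → ℂ) : ℝ := ∑ x, ‖ψ x‖ ^ 2

/-- Partial transpose with respect to the first tensor factor. -/
def pt₁ {m n : Type*} (ρ : Matrix (m × n) (m × n) ℂ) : Matrix (m × n) (m × n) ℂ :=
  Matrix.of fun p q => ρ (q.1, p.2) (p.1, q.2)

/-- Partial transpose with respect to the second tensor factor. -/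
def pt₂ {m n : Type*} (ρ : Matrix (m × n) (m × n) ℂ) : Matrix (m × n) (m × n) ℂ :=
  Matrix.of fun p q => ρ (p.1, q.2) (q.1, p.2)

/-- Partial trace over the first tensor factor. -/
def ptr₁ {m n : Type*} [Fintype m] (ρ : Matrix (m × n) (m × n) ℂ) : Matrix n n ℂ :=
  Matrix.of fun j l => ∑ i, ρ (i, j) (i, l)

/-- Partial trace over the second tensor factor. -/
def ptr₂ {m n : Type*} [Fintype n] (ρ : Matrix (m × n) (m × n) ℂ) : Matrix m m ℂ :=
  Matrix.of fun i k => ∑ j, ρ (i, j) (k, j)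

/-- The positive semidefinite square root of a positive semidefinite matrix
(the definition `Matrix.PosSemidef.sqrt` of the older Mathlib, since removed). -/
def Matrix.PosSemidef.sqrt {n 𝕜 : Type*} [Fintype n] [DecidableEq n] [RCLike 𝕜]
    {A : Matrix n n 𝕜} (hA : A.PosSemidef) : Matrix n n 𝕜 :=
  hA.1.eigenvectorUnitary.1 * diagonal ((↑) ∘ (√·) ∘ hA.1.eigenvalues) *
  (star hA.1.eigenvectorUnitary : Matrix n n 𝕜)

/-- Trace norm (sum of singular values): `‖A‖₁ = tr √(AᴴA)`. -/
def traceNorm {N : Type*} [Fintype N] [DecidableEq N] (A : Matrix N N ℂ) : ℝ :=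
  ((Matrix.posSemidef_conjTranspose_mul_self A).sqrt.trace).re

/-- Purity `tr ρ²` (real part). -/
def purity {N : Type*} [Fintype N] (ρ : Matrix N N ℂ) : ℝ := ((ρ * ρ).trace).re

/-- Separability of a bipartite density matrix. -/
def Separable {m n : Type*} [Fintype m] [Fintype n]
    (ρ : Matrix (m × n) (m × n) ℂ) : Prop :=
  ∃ (k : ℕ) (p : Fin k → ℝ) (σ : Fin k → Matrix m m ℂ) (τ : Fin k → Matrix n n ℂ),
    (∀ i, 0 ≤ p i) ∧ (∑ i, p i = 1) ∧ (∀ i, IsDensity (σ i)) ∧ (∀ i, IsDensity (τ i)) ∧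
    ρ = ∑ i, (p i : ℂ) • (σ i ⊗ₖ τ i)

/-- Extension `E ⊗ id` of a map on the first factor to a bipartite space. -/
def tensExtA {s n : Type*} (E : Matrix s s ℂ → Matrix s s ℂ)
    (X : Matrix (s × n) (s × n) ℂ) : Matrix (s × n) (s × n) ℂ :=
  Matrix.of fun p q => E (Matrix.of fun i k => X (i, p.2) (k, q.2)) p.1 q.1

/-- Extension `id ⊗ A` of a map on the second factor to a bipartite space. -/
def tensExtSys {e s : Type*} (A : Matrix s s ℂ → Matrix s s ℂ)
    (X : Matrix (e × s) (e × s) ℂ) : Matrix (e × s) (e × s) ℂ :=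
  Matrix.of fun p q => A (Matrix.of fun i k => X (p.1, i) (q.1, k)) p.2 q.2

/-- Complete positivity: `E ⊗ id_n` maps PSD matrices to PSD matrices for every `n`. -/
def IsCP {s : Type*} [Fintype s] (E : Matrix s s ℂ → Matrix s s ℂ) : Prop :=
  ∀ (n : ℕ) (X : Matrix (s × Fin n) (s × Fin n) ℂ), X.PosSemidef → (tensExtA E X).PosSemidef

/-- Trace preservation. -/
def IsTP {s : Type*} [Fintype s] (E : Matrix s s ℂ → Matrix s s ℂ) : Prop :=
  ∀ X, (E X).trace = X.trace

/-- The maximally entangled unit vector `|Ψ⁺⟩ = (1/√d) Σᵢ |i⟩⊗|i⟩`. -/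
def maxEntVec (d : ℕ) : Fin d × Fin d → ℂ :=
  fun p => if p.1 = p.2 then (((Real.sqrt d)⁻¹ : ℝ) : ℂ) else 0

/-- The Choi state `χ[E] = (E ⊗ id)(|Ψ⁺⟩⟨Ψ⁺|)` of a map `E`. -/
def ChoiMap {d : ℕ} (E : Matrix (Fin d) (Fin d) ℂ → Matrix (Fin d) (Fin d) ℂ) :
    Matrix (Fin d × Fin d) (Fin d × Fin d) ℂ :=
  tensExtA E (outer (maxEntVec d))

/-- Choi state of a single-intervention process tensor `T`, viewed as a function of the
initial system state and the intervention (a CP map). The first index pair is the first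
time segment (intervention input leg, initial state leg), the second pair is the second
time segment (final state leg, intervention output leg). It is obtained by letting `T`
act on halves of maximally entangled pairs, i.e. on matrix units with `1/d` weights. -/
def ChoiPT {d : ℕ}
    (T : Matrix (Fin d) (Fin d) ℂ →
      (Matrix (Fin d) (Fin d) ℂ → Matrix (Fin d) (Fin d) ℂ) → Matrix (Fin d) (Fin d) ℂ) :
    Matrix ((Fin d × Fin d) × (Fin d × Fin d)) ((Fin d × Fin d) × (Fin d × Fin d)) ℂ :=
  Matrix.of fun p q => (d : ℂ)⁻¹ * (d : ℂ)⁻¹ *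
    (T (Matrix.single p.1.2 q.1.2 1)
       (fun ρ => ρ p.1.1 q.1.1 • Matrix.single p.2.2 q.2.2 1)) p.2.1 q.2.1

/-- A single-intervention process tensor has classical memory if it is a composition of
conditioned instruments: `T[ρ, A] = Σᵢ Φᵢ(A(Iᵢ(ρ)))` with `{Iᵢ}` a quantum instrument
(each `Iᵢ` CP, their sum trace preserving) and each `Φᵢ` a CPT map. -/
def HasClassicalMemory {d : ℕ}
    (T : Matrix (Fin d) (Fin d) ℂ →
      (Matrix (Fin d) (Fin d) ℂ → Matrix (Fin d) (Fin d) ℂ) → Matrix (Fin d) (Fin d) ℂ) :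
    Prop :=
  ∃ (k : ℕ) (I Φ : Fin k → (Matrix (Fin d) (Fin d) ℂ → Matrix (Fin d) (Fin d) ℂ)),
    (∀ i, IsLinearMap ℂ (I i)) ∧ (∀ i, IsCP (I i)) ∧ IsTP (fun ρ => ∑ i, I i ρ) ∧
    (∀ i, IsLinearMap ℂ (Φ i)) ∧ (∀ i, IsCP (Φ i)) ∧ (∀ i, IsTP (Φ i)) ∧
    (∀ ρ A, T ρ A = ∑ i, Φ i (A (I i ρ)))

/-- Action of a Kraus operator on the first factor of a bipartite vector: `(L ⊗ I)ψ`. -/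
def lact {m n : Type*} [Fintype m] (L : Matrix m m ℂ) (ψ : m × n → ℂ) : m × n → ℂ :=
  fun p => ∑ i, L p.1 i * ψ (i, p.2)

/-- Concurrence of a pure bipartite state: `C(ψ) = √(2(1 − tr((tr₂|ψ⟩⟨ψ|)²)))`. -/
def concPure {m n : Type*} [Fintype m] [Fintype n] (ψ : m × n → ℂ) : ℝ :=
  Real.sqrt (2 * (1 - purity (ptr₂ (outer ψ))))

/-- The set of average values `Σₖ pₖ f(ψₖ)` over all pure-state decompositions of `ρ`. -/
def decompAvgs {m n : Type*} [Fintype m] [Fintype n]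
    (f : (m × n → ℂ) → ℝ) (ρ : Matrix (m × n) (m × n) ℂ) : Set ℝ :=
  { r | ∃ (k : ℕ) (p : Fin k → ℝ) (ψ : Fin k → m × n → ℂ),
      (∀ i, 0 < p i) ∧ (∑ i, p i = 1) ∧ (∀ i, vnormSq (ψ i) = 1) ∧
      (ρ = ∑ i, (p i : ℂ) • outer (ψ i)) ∧ r = ∑ i, p i * f (ψ i) }

/-- An entanglement monotone: a nonnegative function of pure bipartite states whose
average does not increase under local CP operations (given by Kraus operators) on the
system (first) factor. -/
def IsEntMonotone {m n : Type*} [Fintype m] [Fintype n] (f : (m × n → ℂ) → ℝ) : Prop :=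
  (∀ ψ, 0 ≤ f ψ) ∧
  ∀ (k : ℕ) (L : Fin k → Matrix m m ℂ), (∑ j, (L j)ᴴ * L j) = 1 →
    ∀ ψ : m × n → ℂ, vnormSq ψ = 1 →
      (∑ j, if vnormSq (lact (L j) ψ) = 0 then 0 else
        vnormSq (lact (L j) ψ) *
          f (fun x => (((Real.sqrt (vnormSq (lact (L j) ψ)))⁻¹ : ℝ) : ℂ) * lact (L j) ψ x))
        ≤ f ψ

end

/-!
Write a pure state `ψ` as the matrix `M = (ψ(i, j))`, so that its reduced state is `M Mᴴ`, with
eigenvalues (Schmidt coefficients) `νᵢ`. Up to a permutation of columns, `(|ψ⟩⟨ψ|)^{T₂}` is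
`M ⊗ Mᴴ`, hence `‖(|ψ⟩⟨ψ|)^{T₂}‖₁ = ‖M‖₁² = (Σ √νᵢ)²`, that is
`‖(|ψ⟩⟨ψ|)^{T₂}‖₁ - 1 = Σ_{i ≠ j} √(νᵢνⱼ)`, while `C(ψ)² = 2 Σ_{i ≠ j} νᵢνⱼ`. Cauchy–Schwarz
over the `N(N - 1)` pairs `i ≠ j` gives the bound for pure states, and convexity of the trace
norm on Hermitian matrices carries it over to the average over any pure-state decomposition of
`ρ`. Finally `ρ^{T₁} = (ρ^{T₂})ᵀ` has the same trace norm as `ρ^{T₂}`.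

The trace norm `tr √(AᴴA)` depends only on the characteristic polynomial of `AᴴA`, which is easy
to compute for conjugates, transposes and Kronecker products.
-/

open Polynomial Unitary

namespace Matrix

variable {n m : Type*} [Fintype n] [DecidableEq n] [Fintype m] [DecidableEq m]

theorem charpoly_conjStarAlgAut {R : Type*} [CommRing R] [StarRing R]
    (U : unitary (Matrix n n R)) (M : Matrix n n R) :
    (conjStarAlgAut R _ U M).charpoly = M.charpoly := by
  rw [conjStarAlgAut_apply, charpoly_mul_comm, ← Matrix.mul_assoc, Unitary.coe_star_mul_self,
    Matrix.one_mul]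

theorem trace_conjStarAlgAut {R : Type*} [CommRing R] [StarRing R]
    (U : unitary (Matrix n n R)) (M : Matrix n n R) :
    (conjStarAlgAut R _ U M).trace = M.trace := by
  rw [conjStarAlgAut_apply, trace_mul_cycle, Unitary.coe_star_mul_self, Matrix.one_mul]

variable {𝕜 : Type*} [RCLike 𝕜] {A : Matrix n n 𝕜} {B : Matrix m m 𝕜}

theorem PosSemidef.trace_sqrt (hA : A.PosSemidef) :
    hA.sqrt.trace = ∑ i, (√(hA.1.eigenvalues i) : 𝕜) := by
  rw [PosSemidef.sqrt, trace_mul_cycle, Unitary.coe_star_mul_self, Matrix.one_mul, trace_diagonal]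
  rfl

namespace IsHermitian

theorem sum_comp_eigenvalues_of_charpoly_eq {ι : Type*} [Fintype ι] (hA : A.IsHermitian)
    {d : ι → ℝ} (h : A.charpoly = ∏ i, (X - C (d i : 𝕜))) (f : ℝ → ℝ) :
    ∑ i, f (hA.eigenvalues i) = ∑ i, f (d i) := by
  have hprod : ∏ i, (X - C (d i : 𝕜)) =
      ((Finset.univ.val.map fun i => (d i : 𝕜)).map fun a => X - C a).prod := by
    rw [Multiset.map_map]; rfl
  have hroots := hA.roots_charpoly_eq_eigenvalues
  rw [h, hprod, roots_multiset_prod_X_sub_C] at hroots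
  have := congrArg (fun s => (s.map (f ∘ RCLike.re)).sum) hroots
  simp only [Multiset.map_map, Function.comp_def, RCLike.ofReal_re] at this
  exact this.symm

theorem charpoly_mul_self (hA : A.IsHermitian) :
    (A * A).charpoly = ∏ i, (X - C ((hA.eigenvalues i ^ 2 : ℝ) : 𝕜)) := by
  conv_lhs => rw [hA.spectral_theorem, ← map_mul, charpoly_conjStarAlgAut, diagonal_mul_diagonal,
    charpoly_diagonal]
  simp [sq]

theorem trace_mul_self (hA : A.IsHermitian) :
    (A * A).trace = ∑ i, ((hA.eigenvalues i ^ 2 : ℝ) : 𝕜) := by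
  conv_lhs => rw [hA.spectral_theorem, ← map_mul, trace_conjStarAlgAut, diagonal_mul_diagonal,
    trace_diagonal]
  simp [sq]

theorem charpoly_kronecker (hA : A.IsHermitian) (hB : B.IsHermitian) :
    (A ⊗ₖ B).charpoly =
      ∏ p : n × m, (X - C ((hA.eigenvalues p.1 * hB.eigenvalues p.2 : ℝ) : 𝕜)) := by
  let W : unitary (Matrix (n × m) (n × m) 𝕜) :=
    ⟨_, kronecker_mem_unitary hA.eigenvectorUnitary.2 hB.eigenvectorUnitary.2⟩
  have hAB : A ⊗ₖ B = conjStarAlgAut 𝕜 _ W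
      (diagonal (RCLike.ofReal ∘ hA.eigenvalues) ⊗ₖ diagonal (RCLike.ofReal ∘ hB.eigenvalues)) := by
    conv_lhs => rw [hA.spectral_theorem, hB.spectral_theorem]
    simp only [conjStarAlgAut_apply, W, star_eq_conjTranspose, conjTranspose_kronecker,
      mul_kronecker_mul]
  rw [hAB, charpoly_conjStarAlgAut, diagonal_kronecker_diagonal, charpoly_diagonal]
  simp

end IsHermitian

end Matrix

section TraceNorm

variable {n m : Type*} [Fintype n] [DecidableEq n] [Fintype m] [DecidableEq m]

theorem traceNorm_eq_sum_sqrt_eigenvalues (A : Matrix n n ℂ) :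
    traceNorm A = ∑ i, √((posSemidef_conjTranspose_mul_self A).1.eigenvalues i) := by
  simp [traceNorm, PosSemidef.trace_sqrt]

theorem traceNorm_eq_of_charpoly_eq {ι : Type*} [Fintype ι] (A : Matrix n n ℂ) {d : ι → ℝ}
    (h : (Aᴴ * A).charpoly = ∏ i, (X - C (d i : ℂ))) : traceNorm A = ∑ i, √(d i) :=
  (traceNorm_eq_sum_sqrt_eigenvalues A).trans
    ((posSemidef_conjTranspose_mul_self A).1.sum_comp_eigenvalues_of_charpoly_eq h _)

theorem traceNorm_congr_charpoly {A B : Matrix n n ℂ}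
    (h : (Aᴴ * A).charpoly = (Bᴴ * B).charpoly) : traceNorm A = traceNorm B := by
  rw [traceNorm_eq_sum_sqrt_eigenvalues B]
  exact traceNorm_eq_of_charpoly_eq A (h.trans (posSemidef_conjTranspose_mul_self B).1.charpoly_eq)

theorem traceNorm_conjTranspose (A : Matrix n n ℂ) : traceNorm Aᴴ = traceNorm A :=
  traceNorm_congr_charpoly (by rw [conjTranspose_conjTranspose, charpoly_mul_comm])

theorem traceNorm_transpose (A : Matrix n n ℂ) : traceNorm Aᵀ = traceNorm A :=
  traceNorm_congr_charpoly (by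
    rw [conjTranspose_transpose_eq_transpose_conjTranspose, ← transpose_mul, charpoly_transpose,
      charpoly_mul_comm])

theorem traceNorm_submatrix_id_perm (A : Matrix n n ℂ) (e : Equiv.Perm n) :
    traceNorm (A.submatrix id e) = traceNorm A :=
  traceNorm_congr_charpoly (by
    rw [conjTranspose_submatrix, ← submatrix_mul _ _ _ _ _ Function.bijective_id]
    simpa [reindex_apply] using charpoly_reindex e.symm (Aᴴ * A))

theorem traceNorm_kronecker (A : Matrix n n ℂ) (B : Matrix m m ℂ) :
    traceNorm (A ⊗ₖ B) = traceNorm A * traceNorm B := by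
  have hA := posSemidef_conjTranspose_mul_self A
  have hB := posSemidef_conjTranspose_mul_self B
  have h : ((A ⊗ₖ B)ᴴ * (A ⊗ₖ B)).charpoly =
      ∏ p : n × m, (X - C ((hA.1.eigenvalues p.1 * hB.1.eigenvalues p.2 : ℝ) : ℂ)) := by
    rw [conjTranspose_kronecker, ← mul_kronecker_mul]
    exact hA.1.charpoly_kronecker hB.1
  rw [traceNorm_eq_of_charpoly_eq _ h, traceNorm_eq_sum_sqrt_eigenvalues A,
    traceNorm_eq_sum_sqrt_eigenvalues B, Fintype.sum_prod_type, Finset.sum_mul_sum]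
  simp_rw [Real.sqrt_mul (hA.eigenvalues_nonneg _)]

theorem Matrix.IsHermitian.traceNorm_eq_sum_abs_eigenvalues {A : Matrix n n ℂ}
    (hA : A.IsHermitian) : traceNorm A = ∑ i, |hA.eigenvalues i| := by
  rw [traceNorm_eq_of_charpoly_eq A (d := fun i => hA.eigenvalues i ^ 2)
    (by rw [hA.eq]; exact hA.charpoly_mul_self)]
  simp_rw [Real.sqrt_sq_eq_abs]

end TraceNorm

section Convexity

variable {n : Type*} [Fintype n] [DecidableEq n]

theorem Matrix.re_mul_diagonal_mul_conjTranspose_apply (V : Matrix n n ℂ) (d : n → ℝ) (i : n) :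
    ((V * diagonal (fun j => (d j : ℂ)) * Vᴴ) i i).re = ∑ j, d j * Complex.normSq (V i j) := by
  simp only [mul_apply, diagonal_apply, mul_ite, mul_zero, Finset.sum_ite_eq', Finset.mem_univ,
    if_true, conjTranspose_apply, Complex.re_sum]
  refine Finset.sum_congr rfl fun j _ => ?_
  rw [mul_comm (V i j), mul_assoc, Complex.star_def, Complex.mul_conj, ← Complex.ofReal_mul,
    Complex.ofReal_re]

theorem Matrix.sum_normSq_apply_of_mem_unitaryGroup {V : Matrix n n ℂ}
    (hV : V ∈ unitaryGroup n ℂ) (j : n) : ∑ i, Complex.normSq (V i j) = 1 := by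
  have h := congrFun (congrFun (mem_unitaryGroup_iff'.mp hV) j) j
  simp only [mul_apply, star_apply, one_apply_eq, Complex.star_def] at h
  exact_mod_cast (by simpa [Complex.normSq_eq_conj_mul_self] using h :
    ((∑ i, Complex.normSq (V i j) : ℝ) : ℂ) = 1)

theorem Matrix.IsHermitian.sum_mul_re_diag_conj_le {A : Matrix n n ℂ} (hA : A.IsHermitian)
    (W : unitaryGroup n ℂ) {s : n → ℝ} (hs : ∀ i, |s i| ≤ 1) :
    ∑ i, s i * ((star (W : Matrix n n ℂ) * A * W) i i).re ≤ ∑ i, |hA.eigenvalues i| := by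
  set V : unitaryGroup n ℂ := star W * hA.eigenvectorUnitary
  have hconj : star (W : Matrix n n ℂ) * A * W =
      V * diagonal (fun j => (hA.eigenvalues j : ℂ)) * (V : Matrix n n ℂ)ᴴ := by
    conv_lhs => rw [hA.spectral_theorem]
    simp only [V, Unitary.conjStarAlgAut_apply, Submonoid.coe_mul, Unitary.coe_star,
      ← star_eq_conjTranspose, star_mul, star_star, Matrix.mul_assoc]
    rfl
  simp_rw [hconj, re_mul_diagonal_mul_conjTranspose_apply, Finset.mul_sum]
  rw [Finset.sum_comm]
  refine Finset.sum_le_sum fun j _ => ?_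
  have hcol : |∑ i, s i * Complex.normSq (V i j)| ≤ 1 := by
    calc |∑ i, s i * Complex.normSq (V i j)|
        ≤ ∑ i, Complex.normSq (V i j) := by
          refine (Finset.abs_sum_le_sum_abs _ _).trans (Finset.sum_le_sum fun i _ => ?_)
          rw [abs_mul, abs_of_nonneg (Complex.normSq_nonneg _)]
          exact mul_le_of_le_one_left (Complex.normSq_nonneg _) (hs i)
      _ = 1 := sum_normSq_apply_of_mem_unitaryGroup V.2 j
  calc ∑ i, s i * (hA.eigenvalues j * Complex.normSq (V i j))
      = hA.eigenvalues j * ∑ i, s i * Complex.normSq (V i j) := by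
        rw [Finset.mul_sum]; exact Finset.sum_congr rfl fun i _ => by ring
    _ ≤ |hA.eigenvalues j * ∑ i, s i * Complex.normSq (V i j)| := le_abs_self _
    _ ≤ |hA.eigenvalues j| := by
        rw [abs_mul]; exact mul_le_of_le_one_right (abs_nonneg _) hcol

theorem traceNorm_sum_smul_le {ι : Type*} (s : Finset ι) {p : ι → ℝ} {B : ι → Matrix n n ℂ}
    (hp : ∀ i ∈ s, 0 ≤ p i) (hB : ∀ i ∈ s, (B i).IsHermitian) :
    traceNorm (∑ i ∈ s, (p i : ℂ) • B i) ≤ ∑ i ∈ s, p i * traceNorm (B i) := by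
  have hH : (∑ i ∈ s, (p i : ℂ) • B i).IsHermitian :=
    isSelfAdjoint_sum s fun i hi => (hB i hi).smul (k := (p i : ℂ)) (Complex.conj_ofReal _)
  set W := hH.eigenvectorUnitary
  set σ : n → ℝ := fun i => SignType.sign (hH.eigenvalues i)
  have hσ : ∀ i, |σ i| ≤ 1 := fun i => by
    rcases lt_trichotomy (hH.eigenvalues i) 0 with h | h | h <;> simp [σ, h]
  have hdiag : ∀ i, ((star (W : Matrix n n ℂ) * (∑ k ∈ s, (p k : ℂ) • B k) * W) i i).re =
      hH.eigenvalues i := fun i => by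
    have h := congrArg (fun M => (M i i).re) hH.conjStarAlgAut_star_eigenvectorUnitary
    simp only [Unitary.conjStarAlgAut_star_apply, diagonal_apply_eq] at h
    exact h
  calc traceNorm (∑ i ∈ s, (p i : ℂ) • B i)
      = ∑ i, σ i * ((star (W : Matrix n n ℂ) * (∑ k ∈ s, (p k : ℂ) • B k) * W) i i).re := by
        simp_rw [hH.traceNorm_eq_sum_abs_eigenvalues, hdiag, σ, sign_mul_self]
    _ = ∑ k ∈ s, p k * ∑ i, σ i * ((star (W : Matrix n n ℂ) * B k * W) i i).re := by
        simp_rw [Finset.mul_sum, Finset.sum_mul, Matrix.mul_smul, Matrix.smul_mul, Matrix.sum_apply,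
          Matrix.smul_apply, Complex.re_sum, smul_eq_mul, Complex.re_ofReal_mul, Finset.mul_sum]
        rw [Finset.sum_comm]
        exact Finset.sum_congr rfl fun k _ => Finset.sum_congr rfl fun i _ => by ring
    _ ≤ ∑ k ∈ s, p k * traceNorm (B k) := by
        refine Finset.sum_le_sum fun k hk => mul_le_mul_of_nonneg_left ?_ (hp k hk)
        rw [(hB k hk).traceNorm_eq_sum_abs_eigenvalues]
        exact (hB k hk).sum_mul_re_diag_conj_le W hσ

end Convexity

theorem Finset.sq_sum_sub_sum_sq {α R : Type*} [DecidableEq α] [CommRing R] (s : Finset α)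
    (x : α → R) : (∑ i ∈ s, x i) ^ 2 - ∑ i ∈ s, x i ^ 2 = ∑ p ∈ s.offDiag, x p.1 * x p.2 := by
  rw [sq, Finset.sum_mul_sum, ← Finset.sum_product', ← Finset.diag_union_offDiag,
    Finset.sum_union (Finset.disjoint_diag_offDiag _), Finset.sum_diag]
  simp [sq]

theorem sqrt_two_div_mul_sq_sum_sqrt_sub_one_le {n : Type*} [Fintype n] [DecidableEq n]
    {ν : n → ℝ} (hν : ∀ i, 0 ≤ ν i) (h1 : ∑ i, ν i = 1) :
    √(2 / ((Fintype.card n : ℝ) * ((Fintype.card n : ℝ) - 1))) * ((∑ i, √(ν i)) ^ 2 - 1) ≤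
      √(2 * (1 - ∑ i, ν i ^ 2)) := by
  set x : ℝ := (Fintype.card n : ℝ) * ((Fintype.card n : ℝ) - 1)
  set D := ∑ p ∈ Finset.univ.offDiag, √(ν p.1) * √(ν p.2)
  set E := ∑ p ∈ Finset.univ.offDiag, ν p.1 * ν p.2
  have hD : (∑ i, √(ν i)) ^ 2 - 1 = D := by
    have := Finset.univ.sq_sum_sub_sum_sq fun i => √(ν i)
    simp_rw [Real.sq_sqrt (hν _), h1] at this
    exact this
  have hE : 1 - ∑ i, ν i ^ 2 = E := by
    have := Finset.univ.sq_sum_sub_sum_sq ν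
    rwa [h1, one_pow] at this
  have hcard : ((Finset.univ : Finset n).offDiag.card : ℝ) = x := by
    rw [Finset.offDiag_card, Finset.card_univ, Nat.cast_sub (Nat.le_mul_self _)]
    push_cast
    ring
  have hCS : D ^ 2 ≤ x * E := by
    have := sq_sum_le_card_mul_sum_sq (s := Finset.univ.offDiag)
      (f := fun p : n × n => √(ν p.1) * √(ν p.2))
    simpa only [hcard, mul_pow, Real.sq_sqrt (hν _)] using this
  have hx0 : 0 ≤ x := hcard ▸ Nat.cast_nonneg _
  have hE0 : 0 ≤ E := Finset.sum_nonneg fun p _ => mul_nonneg (hν _) (hν _)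
  have hx : 2 / x * x ≤ 2 := by
    rcases eq_or_ne x 0 with h | h
    · simp [h]
    · rw [div_mul_cancel₀ _ h]
  have hD0 : 0 ≤ D := Finset.sum_nonneg fun p _ => by positivity
  rw [hD, hE, ← Real.sqrt_sq hD0, ← Real.sqrt_mul' _ (sq_nonneg D)]
  refine Real.sqrt_le_sqrt ?_
  calc 2 / x * D ^ 2 ≤ 2 / x * (x * E) := by gcongr
    _ = 2 / x * x * E := by ring
    _ ≤ 2 * E := by gcongr

section PartialTranspose

variable {m n : Type*}

theorem pt₁_eq_transpose_pt₂ (ρ : Matrix (m × n) (m × n) ℂ) : pt₁ ρ = (pt₂ ρ)ᵀ := rfl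

theorem Matrix.IsHermitian.pt₂ {ρ : Matrix (m × n) (m × n) ℂ} (hρ : ρ.IsHermitian) :
    (pt₂ ρ).IsHermitian := by
  ext p q
  simpa [_root_.pt₂] using congrFun (congrFun hρ (p.1, q.2)) (q.1, p.2)

theorem pt₂_sum_smul {ι : Type*} (s : Finset ι) (c : ι → ℂ) (X : ι → Matrix (m × n) (m × n) ℂ) :
    pt₂ (∑ i ∈ s, c i • X i) = ∑ i ∈ s, c i • pt₂ (X i) := by
  ext p q
  simp [pt₂, Matrix.sum_apply]

theorem isHermitian_outer (ψ : n → ℂ) : (outer ψ).IsHermitian := by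
  ext i j
  simp [outer, mul_comm]

theorem pt₂_outer (ψ : n × n → ℂ) :
    pt₂ (outer ψ) =
      (of (Function.curry ψ) ⊗ₖ (of (Function.curry ψ))ᴴ).submatrix id (Equiv.prodComm n n) := by
  ext p q
  simp [pt₂, outer]

variable [Fintype n]

theorem trace_outer (ψ : n → ℂ) : (outer ψ).trace = vnormSq ψ := by
  simp [trace, outer, vnormSq, Complex.mul_conj, Complex.normSq_eq_norm_sq]

theorem trace_ptr₂ [Fintype m] (ρ : Matrix (m × n) (m × n) ℂ) : (ptr₂ ρ).trace = ρ.trace := by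
  simp [trace, ptr₂, Fintype.sum_prod_type]

theorem ptr₂_outer (ψ : m × n → ℂ) :
    ptr₂ (outer ψ) = of (Function.curry ψ) * (of (Function.curry ψ))ᴴ := by
  ext i k
  simp [ptr₂, outer, mul_apply]

variable [DecidableEq n]

theorem traceNorm_pt₂_outer (ψ : n × n → ℂ) :
    traceNorm (pt₂ (outer ψ)) = traceNorm (of (Function.curry ψ))ᴴ ^ 2 := by
  rw [pt₂_outer, traceNorm_submatrix_id_perm, traceNorm_kronecker, traceNorm_conjTranspose, sq]

theorem sqrt_two_div_mul_traceNorm_pt₂_outer_sub_one_le_concPure {ψ : n × n → ℂ}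
    (hψ : vnormSq ψ = 1) :
    √(2 / ((Fintype.card n : ℝ) * ((Fintype.card n : ℝ) - 1))) *
      (traceNorm (pt₂ (outer ψ)) - 1) ≤ concPure ψ := by
  set M := of (Function.curry ψ)
  have hA : (ptr₂ (outer ψ)).PosSemidef := ptr₂_outer ψ ▸ posSemidef_self_mul_conjTranspose M
  set ν := hA.1.eigenvalues
  have hcharpoly : (Mᴴᴴ * Mᴴ).charpoly = ∏ i, (X - C (ν i : ℂ)) := by
    rw [conjTranspose_conjTranspose, ← ptr₂_outer]
    exact hA.1.charpoly_eq
  have hnorm : traceNorm (pt₂ (outer ψ)) = (∑ i, √(ν i)) ^ 2 := by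
    rw [traceNorm_pt₂_outer, traceNorm_eq_of_charpoly_eq Mᴴ hcharpoly]
  have htrace : ∑ i, ν i = 1 := by
    have h := hA.1.trace_eq_sum_eigenvalues
    rw [trace_ptr₂, trace_outer, hψ] at h
    simpa [ν] using (congrArg Complex.re h).symm
  have hpurity : purity (ptr₂ (outer ψ)) = ∑ i, ν i ^ 2 := by
    simp [purity, hA.1.trace_mul_self, ν, -Complex.ofReal_pow]
  rw [concPure, hnorm, hpurity]
  exact sqrt_two_div_mul_sq_sum_sqrt_sub_one_le hA.eigenvalues_nonneg htrace

end PartialTranspose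

section ConvexRoof

theorem Fintype.sum_equivFin_symm_subtype_of_ne_zero {ι M : Type*} [Fintype ι] [AddCommMonoid M]
    {P : ι → Prop} [DecidablePred P] {f : ι → M} (hf : ∀ i, f i ≠ 0 → P i) :
    ∑ i, f ((Fintype.equivFin (Subtype P)).symm i) = ∑ i, f i := by
  rw [Equiv.sum_comp (Fintype.equivFin (Subtype P)).symm (fun i => f i),
    ← Finset.sum_subtype (Finset.univ.filter P) (by simp),
    Finset.sum_filter_of_ne fun i _ => hf i]

theorem Matrix.IsHermitian.eq_sum_eigenvalues_smul_outer {n : Type*} [Fintype n] [DecidableEq n]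
    {A : Matrix n n ℂ} (hA : A.IsHermitian) :
    A = ∑ j, (hA.eigenvalues j : ℂ) • outer (fun i => hA.eigenvectorUnitary i j) := by
  conv_lhs => rw [hA.spectral_theorem]
  ext a b
  simp [outer, mul_apply, Matrix.sum_apply, diagonal_apply, mul_assoc, mul_left_comm]

variable {m n : Type*} [Fintype m] [Fintype n] [DecidableEq m] [DecidableEq n]

/-- A spectral decomposition of `ρ`, with the zero eigenvalues dropped. -/
theorem decompAvgs_nonempty (f : (m × n → ℂ) → ℝ) {ρ : Matrix (m × n) (m × n) ℂ}
    (hρ : IsDensity ρ) : (decompAvgs f ρ).Nonempty := by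
  have hA := hρ.1.1
  set ev := hA.eigenvalues
  have hpos : ∀ j, ev j ≠ 0 → 0 < ev j := fun j h => (hρ.1.eigenvalues_nonneg j).lt_of_ne' h
  refine ⟨_, _, _, fun i x => hA.eigenvectorUnitary x ((Fintype.equivFin {j // 0 < ev j}).symm i),
    fun i => ((Fintype.equivFin {j // 0 < ev j}).symm i).2, ?_, fun i => ?_, ?_, rfl⟩
  · rw [Fintype.sum_equivFin_symm_subtype_of_ne_zero hpos]
    simpa [ev] using congrArg Complex.re (hA.trace_eq_sum_eigenvalues.symm.trans hρ.2)
  · simp only [vnormSq, ← Complex.normSq_eq_norm_sq]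
    exact sum_normSq_apply_of_mem_unitaryGroup hA.eigenvectorUnitary.2 _
  · refine hA.eq_sum_eigenvalues_smul_outer.trans (Eq.symm ?_)
    exact Fintype.sum_equivFin_symm_subtype_of_ne_zero
      (f := fun j => (ev j : ℂ) • outer fun x => hA.eigenvectorUnitary x j)
      fun j h => hpos j fun h0 => h (by simp [h0])

theorem sqrt_two_div_mul_traceNorm_pt₂_sub_one_le_of_mem_decompAvgs
    {ρ : Matrix (n × n) (n × n) ℂ} {r : ℝ} (hr : r ∈ decompAvgs concPure ρ) :
    √(2 / ((Fintype.card n : ℝ) * ((Fintype.card n : ℝ) - 1))) * (traceNorm (pt₂ ρ) - 1) ≤ r := by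
  obtain ⟨k, p, ψ, hp, hp1, hψ, rfl, rfl⟩ := hr
  set c := √(2 / ((Fintype.card n : ℝ) * ((Fintype.card n : ℝ) - 1)))
  calc c * (traceNorm (pt₂ (∑ i, (p i : ℂ) • outer (ψ i))) - 1)
      ≤ c * (∑ i, p i * traceNorm (pt₂ (outer (ψ i))) - ∑ i, p i) := by
        rw [hp1, pt₂_sum_smul]
        gcongr
        exact traceNorm_sum_smul_le _ (fun i _ => (hp i).le) fun i _ => (isHermitian_outer _).pt₂
    _ = ∑ i, p i * (c * (traceNorm (pt₂ (outer (ψ i))) - 1)) := by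
        rw [← Finset.sum_sub_distrib, Finset.mul_sum]
        exact Finset.sum_congr rfl fun i _ => by ring
    _ ≤ ∑ i, p i * concPure (ψ i) := Finset.sum_le_sum fun i _ => mul_le_mul_of_nonneg_left
        (sqrt_two_div_mul_traceNorm_pt₂_outer_sub_one_le_concPure (hψ i)) (hp i).le

end ConvexRoof

theorem stmt16_general {N : ℕ}
    (ρ : Matrix (Fin N × Fin N) (Fin N × Fin N) ℂ) (hρ : IsDensity ρ) :
    Real.sqrt (2 / ((N : ℝ) * ((N : ℝ) - 1))) *
        max (traceNorm (pt₁ ρ) - 1) (traceNorm (pt₂ ρ) - 1)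
      ≤ sInf (decompAvgs concPure ρ) := by
  rw [pt₁_eq_transpose_pt₂, traceNorm_transpose, max_self]
  refine le_csInf (decompAvgs_nonempty concPure hρ) fun r hr => ?_
  simpa using sqrt_two_div_mul_traceNorm_pt₂_sub_one_le_of_mem_decompAvgs hr

/-- Chen–Albeverio–Fei lower bound on the convex-roof I-concurrence:
`C[ρ] ≥ √(2/(N(N−1))) · max{‖ρ^{T₁}‖₁ − 1, ‖ρ^{T₂}‖₁ − 1}`. -/
theorem stmt16 {N : ℕ} (hN : 0 < N)
    (ρ : Matrix (Fin N × Fin N) (Fin N × Fin N) ℂ) (hρ : IsDensity ρ) :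
    Real.sqrt (2 / ((N : ℝ) * ((N : ℝ) - 1))) *
        max (traceNorm (pt₁ ρ) - 1) (traceNorm (pt₂ ρ) - 1)
      ≤ sInf (decompAvgs concPure ρ) :=
  stmt16_general ρ hρ
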